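/- arXiv:1705.03073 — 2 statements merged into one kernel-verified Lean document; each statement's English description precedes it below -/
import Mathlib

section
/- Let m > 0, X > 0, let K : [0,X]×[0,X] → ℝ be continuous and positive, and let y : [0,X] → ℝ be a continuous nonnegative solution of y(x)^{m+1} = ∫_0^x K(x,t) y(t) dt for all x ∈ [0,X]. Fix N ∈ ℕ, N ≥ 2, set h = X/N and x_n = n·h, let w_{n,i} > 0 be quadrature weights, and let (y_n)_{n≥1} be the nonnegative sequence defined by a starting value y_1 ≥ 0 and y_n = (h · ∑_{i=1}^{n-1} w_{n,i} K(x_n,x_i) y_i)^{1/(m+1)} for 2 ≤ n ≤ N. Define the local consistency errors δ_n := ∫_0^{x_n} K(x_n,t) y(t) dt − h · ∑_{i=1}^{n-1} w_{n,i} K(x_n,x_i) y(x_i). If δ_n ≤ 0 for all n = 1,…,N and y(h) ≤ y_1, then y(n·h) ≤ y_n for all n = 1,…,N. -/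
open Real Set Filter intervalIntegral

/-!
The exact values `y (n * h)` form a subsolution of the scheme: by the solution identity and
`δ_n ≤ 0`, `y(x_n)^(m+1)` is at most the quadrature sum evaluated at the exact values. Since
the scheme is explicit with nonnegative coefficients and `t ↦ t^(1/(m+1))` is monotone, strong
induction on `n` propagates `y(x_1) ≤ y_1` to every grid point.
-/

theorem le_of_rpow_le_sum_of_eq_rpow_sum {N : ℕ} {p : ℝ} (hp : 0 < p) {a : ℕ → ℕ → ℝ}
    {u v : ℕ → ℝ}
    (ha : ∀ n i, 1 ≤ i → i < n → n ≤ N → 0 ≤ a n i)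
    (hu : ∀ n, 1 ≤ n → n ≤ N → 0 ≤ u n)
    (hu_sub : ∀ n, 2 ≤ n → n ≤ N → u n ^ p ≤ ∑ i ∈ Finset.Ico 1 n, a n i * u i)
    (hv : ∀ n, 2 ≤ n → n ≤ N → v n = (∑ i ∈ Finset.Ico 1 n, a n i * v i) ^ (1 / p))
    (h1 : u 1 ≤ v 1) :
    ∀ n, 1 ≤ n → n ≤ N → u n ≤ v n := by
  intro n
  induction n using Nat.strong_induction_on with
  | _ n ih =>
    intro hn hnN
    obtain rfl | hn2 := hn.eq_or_lt
    · exact h1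
    have hsum : ∑ i ∈ Finset.Ico 1 n, a n i * u i ≤ ∑ i ∈ Finset.Ico 1 n, a n i * v i := by
      refine Finset.sum_le_sum fun i hi => ?_
      obtain ⟨hi1, hin⟩ := Finset.mem_Ico.mp hi
      exact mul_le_mul_of_nonneg_left (ih i hin hi1 (hin.le.trans hnN)) (ha n i hi1 hin hnN)
    have hle : u n ^ p ≤ ∑ i ∈ Finset.Ico 1 n, a n i * v i := (hu_sub n hn2 hnN).trans hsum
    have hun := hu n hn hnN
    rw [hv n hn2 hnN, one_div,
      le_rpow_inv_iff_of_pos hun ((rpow_nonneg hun p).trans hle) hp]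
    exact hle

theorem natCast_mul_div_mem_Icc {X : ℝ} (hX : 0 ≤ X) {k N : ℕ} (hk : k ≤ N) :
    (k : ℝ) * (X / N) ∈ Icc 0 X := by
  have hkN : (k : ℝ) / N ≤ 1 := div_le_one_of_le₀ (by exact_mod_cast hk) N.cast_nonneg
  refine ⟨by positivity, ?_⟩
  calc (k : ℝ) * (X / N) = (k / N) * X := by ring
    _ ≤ 1 * X := by gcongr
    _ = X := one_mul X

theorem stmt1_general
    (m X : ℝ) (hm : 0 < m) (hX : 0 < X)
    (K : ℝ → ℝ → ℝ)
    (hKpos : ∀ x ∈ Set.Icc (0 : ℝ) X, ∀ t ∈ Set.Icc (0 : ℝ) X, 0 < K x t)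
    (y : ℝ → ℝ)
    (hynonneg : ∀ x ∈ Set.Icc (0 : ℝ) X, 0 ≤ y x)
    (hsol : ∀ x ∈ Set.Icc (0 : ℝ) X, y x ^ (m + 1) = ∫ t in (0 : ℝ)..x, K x t * y t)
    (N : ℕ)
    (h : ℝ) (hh : h = X / N)
    (w : ℕ → ℕ → ℝ)
    (hw : ∀ n i : ℕ, 0 < w n i)
    (yd : ℕ → ℝ)
    (hscheme : ∀ n : ℕ, 2 ≤ n → n ≤ N →
      yd n = (h * ∑ i ∈ Finset.Ico 1 n, w n i * K ((n : ℝ) * h) ((i : ℝ) * h) * yd i)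
        ^ (1 / (m + 1)))
    (hδ : ∀ n : ℕ, 1 ≤ n → n ≤ N →
      (∫ t in (0 : ℝ)..((n : ℝ) * h), K ((n : ℝ) * h) t * y t)
        - h * ∑ i ∈ Finset.Ico 1 n, w n i * K ((n : ℝ) * h) ((i : ℝ) * h) * y ((i : ℝ) * h) ≤ 0)
    (hinit : y h ≤ yd 1) :
    ∀ n : ℕ, 1 ≤ n → n ≤ N → y ((n : ℝ) * h) ≤ yd n := by
  subst hh
  have hgrid : ∀ k ≤ N, (k : ℝ) * (X / N) ∈ Icc 0 X := fun k hk =>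
    natCast_mul_div_mem_Icc hX.le hk
  have hmul_sum : ∀ (n : ℕ) (v : ℕ → ℝ),
      X / N * ∑ i ∈ Finset.Ico 1 n, w n i * K (n * (X / N)) (i * (X / N)) * v i =
        ∑ i ∈ Finset.Ico 1 n, X / N * (w n i * K (n * (X / N)) (i * (X / N))) * v i := by
    intro n v
    simp only [Finset.mul_sum, mul_assoc]
  refine le_of_rpow_le_sum_of_eq_rpow_sum (by linarith : 0 < m + 1)
    (a := fun n i => X / N * (w n i * K (n * (X / N)) (i * (X / N))))
    (u := fun n => y (n * (X / N)))
    (fun n i hi hin hnN => ?_) (fun n _ hnN => hynonneg _ (hgrid n hnN))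
    (fun n hn hnN => ?_) (fun n hn hnN => ?_) (by simpa using hinit)
  · have := hKpos _ (hgrid n hnN) _ (hgrid i (hin.le.trans hnN))
    have := hw n i
    positivity
  · rw [← hmul_sum, hsol _ (hgrid n hnN)]
    linarith [hδ n (by omega) hnN]
  · rw [← hmul_sum]
    exact hscheme n hn hnN

/-- STATEMENT 0: monotone comparison between the exact solution and the explicit
finite-difference scheme when all local consistency errors are nonpositive. -/
theorem stmt1
    (m X : ℝ) (hm : 0 < m) (hX : 0 < X)
    (K : ℝ → ℝ → ℝ)
    (hKcont : ContinuousOn (fun p : ℝ × ℝ => K p.1 p.2) (Set.Icc 0 X ×ˢ Set.Icc 0 X))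
    (hKpos : ∀ x ∈ Set.Icc (0 : ℝ) X, ∀ t ∈ Set.Icc (0 : ℝ) X, 0 < K x t)
    (y : ℝ → ℝ)
    (hycont : ContinuousOn y (Set.Icc 0 X))
    (hynonneg : ∀ x ∈ Set.Icc (0 : ℝ) X, 0 ≤ y x)
    (hsol : ∀ x ∈ Set.Icc (0 : ℝ) X, y x ^ (m + 1) = ∫ t in (0 : ℝ)..x, K x t * y t)
    (N : ℕ) (hN : 2 ≤ N)
    (h : ℝ) (hh : h = X / N)
    (w : ℕ → ℕ → ℝ)
    (hw : ∀ n i : ℕ, 0 < w n i)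
    (yd : ℕ → ℝ)
    (hyd1 : 0 ≤ yd 1)
    (hscheme : ∀ n : ℕ, 2 ≤ n → n ≤ N →
      yd n = (h * ∑ i ∈ Finset.Ico 1 n, w n i * K ((n : ℝ) * h) ((i : ℝ) * h) * yd i)
        ^ (1 / (m + 1)))
    (hδ : ∀ n : ℕ, 1 ≤ n → n ≤ N →
      (∫ t in (0 : ℝ)..((n : ℝ) * h), K ((n : ℝ) * h) t * y t)
        - h * ∑ i ∈ Finset.Ico 1 n, w n i * K ((n : ℝ) * h) ((i : ℝ) * h) * y ((i : ℝ) * h) ≤ 0)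
    (hinit : y h ≤ yd 1) :
    ∀ n : ℕ, 1 ≤ n → n ≤ N → y ((n : ℝ) * h) ≤ yd n :=
  stmt1_general m X hm hX K hKpos y hynonneg hsol N h hh w hw yd hscheme hδ hinit
end

section
/- Let m ≥ 1 and h > 0. Then 0 ≤ h·(h/2)^{1/m} − ∫_0^h t^{1/m} dt ≤ (h/2) · h^{1/m}; in particular the local consistency error of the midpoint rule applied to t ↦ t^{1/m} on [0,h] is nonnegative and of order h^{1+1/m}. -/
/-!
Both the midpoint value and the integral are explicit multiples of `h ^ (p + 1)`, namely
`h ^ (p + 1) / 2 ^ p` and `h ^ (p + 1) / (p + 1)`. For `0 ≤ p ≤ 1` the error is therefore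
nonnegative by Bernoulli's inequality `2 ^ p ≤ 1 + p`, and at most `h ^ (p + 1) / 2` because
`1 ≤ 2 ^ p` and `p + 1 ≤ 2`.
-/

open Real intervalIntegral

lemma integral_zero_rpow {p : ℝ} (hp : -1 < p) (h : ℝ) :
    ∫ t in (0 : ℝ)..h, t ^ p = h ^ (p + 1) / (p + 1) := by
  rw [integral_rpow (Or.inl hp), zero_rpow (by linarith), sub_zero]

lemma mul_half_rpow {h : ℝ} (hh : 0 < h) (p : ℝ) :
    h * (h / 2) ^ p = h ^ (p + 1) / 2 ^ p := by
  rw [div_rpow hh.le zero_le_two, rpow_add hh, rpow_one]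
  ring

lemma two_rpow_le_one_add {p : ℝ} (hp₀ : 0 ≤ p) (hp₁ : p ≤ 1) : (2 : ℝ) ^ p ≤ 1 + p := by
  simpa [one_add_one_eq_two] using rpow_one_add_le_one_add_mul_self (s := 1) (by norm_num) hp₀ hp₁

section MidpointRpow

variable {p h : ℝ} (hp₀ : 0 ≤ p) (hp₁ : p ≤ 1) (hh : 0 < h)
include hp₀ hp₁ hh

lemma integral_rpow_le_midpoint : ∫ t in (0 : ℝ)..h, t ^ p ≤ h * (h / 2) ^ p := by
  rw [integral_zero_rpow (by linarith) h, mul_half_rpow hh, add_comm p 1]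
  gcongr
  exact two_rpow_le_one_add hp₀ hp₁

lemma midpoint_sub_integral_rpow_le :
    h * (h / 2) ^ p - ∫ t in (0 : ℝ)..h, t ^ p ≤ h / 2 * h ^ p := by
  have hpow : 0 ≤ h ^ (p + 1) := by positivity
  have hmid : h ^ (p + 1) / 2 ^ p ≤ h ^ (p + 1) :=
    div_le_self hpow (one_le_rpow one_le_two hp₀)
  have hint : h ^ (p + 1) / 2 ≤ h ^ (p + 1) / (p + 1) := by
    gcongr
    linarith
  have hrhs : h / 2 * h ^ p = h ^ (p + 1) / 2 := by
    rw [rpow_add hh, rpow_one]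
    ring
  rw [integral_zero_rpow (by linarith) h, mul_half_rpow hh, hrhs]
  linarith

end MidpointRpow

/-- the local consistency error of the midpoint rule applied to
`t ↦ t^(1/m)` on `[0,h]` is nonnegative and bounded by `(h/2) * h^(1/m)`. -/
theorem stmt15
    (m h : ℝ) (hm : 1 ≤ m) (hh : 0 < h) :
    0 ≤ h * (h / 2) ^ (1 / m) - ∫ t in (0 : ℝ)..h, t ^ (1 / m) ∧
    h * (h / 2) ^ (1 / m) - (∫ t in (0 : ℝ)..h, t ^ (1 / m)) ≤ (h / 2) * h ^ (1 / m) := by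
  have hp₀ : 0 ≤ 1 / m := by positivity
  have hp₁ : 1 / m ≤ 1 := (div_le_one (by linarith)).2 hm
  exact ⟨sub_nonneg.2 (integral_rpow_le_midpoint hp₀ hp₁ hh),
    midpoint_sub_integral_rpow_le hp₀ hp₁ hh⟩
end
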